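/- arXiv:2511.05257 — 4 statements merged into one kernel-verified Lean document; each statement's English description precedes it below -/
import Mathlib

section
/- Let P_1, …, P_N be homogeneous complex polynomials of degree k ≥ 2 in N variables such that Σ_{i=1}^N z_i P_i(z) = 0 for all z ∈ ℂ^N. Then the P_i have a nontrivial common root, i.e. there exists z ∈ ℂ^N \ {0} with P_1(z) = ⋯ = P_N(z) = 0. -/
/-!
Suppose the `P i` have no common zero besides the origin. By the Nullstellensatz a power
`X j ^ D j` of every variable lies in the ideal `I = (P 1, …, P N)`, so `I` contains a regular
sequence of length `N`. Hence the Koszul complex of `(P 1, …, P N)` is exact in positive degrees,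
and the syzygy `∑ P i * X i = 0` is a Koszul boundary: every `X i` lies in `I`. This is absurd,
as `I` is generated in degree `k ≥ 2`.
-/

open Finset RingTheory.Sequence
open scoped Pointwise

namespace KoszulComplex

variable {R M ι : Type*} [CommRing R] [AddCommGroup M] [Module R M] [LinearOrder ι]

/-- `e_i ∧ e_t = sign i t • e_(insert i t)` for `i ∉ t`. -/
def sign (i : ι) (t : Finset ι) : R := (-1) ^ #{j ∈ t | j < i}

lemma sign_mul_self (i : ι) (t : Finset ι) : (sign i t : R) * sign i t = 1 := by
  rw [sign, ← pow_add, ← two_mul, pow_mul, neg_one_sq, one_pow]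

lemma sign_insert {i : ι} (l : ι) {s : Finset ι} (hi : i ∉ s) :
    (sign l (insert i s) : R) = (if i < l then -1 else 1) * sign l s := by
  rw [sign, sign, filter_insert]
  split_ifs
  · rw [card_insert_of_notMem (by simp [hi]), pow_succ, mul_comm]
  · rw [one_mul]

lemma sign_insert_mul_sign {i l : ι} {s : Finset ι} (hil : i ≠ l) (hi : i ∉ s) (hl : l ∉ s) :
    (sign i (insert l s) : R) * sign l s = -(sign l (insert i s) * sign i s) := by
  rw [sign_insert i hl, sign_insert l hi]
  rcases hil.lt_or_gt with h | h
  · rw [if_pos h, if_neg h.not_gt]; ring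
  · rw [if_neg h.not_gt, if_pos h]; ring

lemma sign_insert_mul_sign_insert {i j : ι} {s : Finset ι} (hij : i ≠ j) (hi : i ∉ s)
    (hj : j ∉ s) : (sign i (insert j s) : R) * sign j (insert i s) = -(sign i s * sign j s) := by
  rw [sign_insert i hj, sign_insert j hi]
  rcases hij.lt_or_gt with h | h
  · rw [if_pos h, if_neg h.not_gt]; ring
  · rw [if_neg h.not_gt, if_pos h]; ring

variable (R) in
/-- Exterior multiplication by `e_j`. -/
def wedge (j : ι) (f : Finset ι → M) (t : Finset ι) : M :=
  if j ∈ t then (sign j (t.erase j) : R) • f (t.erase j) else 0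

@[simp]
lemma wedge_zero (j : ι) : wedge R j (0 : Finset ι → M) = 0 := by
  ext t; simp [wedge]

variable [Fintype ι]

/-- A chain of the Koszul complex `K(x; M)` is stored as the family `t ↦ f t` of its
coefficients on the basis `e_t` of `⋀ Rᶥ`; the differential contracts with `x`, sending degree
`#t + 1` to degree `#t`. -/
def diff (x : ι → R) : (Finset ι → M) →ₗ[R] Finset ι → M where
  toFun f t := ∑ i ∈ tᶜ, (sign i t * x i) • f (insert i t)
  map_add' f g := by ext t; simp [smul_add, sum_add_distrib]
  map_smul' c f := by ext t; simp [smul_sum, smul_comm c]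

lemma diff_apply (x : ι → R) (f : Finset ι → M) (t : Finset ι) :
    diff x f t = ∑ i ∈ tᶜ, (sign i t * x i) • f (insert i t) := rfl

lemma diff_diff (x : ι → R) (f : Finset ι → M) : diff x (diff x f) = 0 := by
  ext t
  have hpair : ∀ i ∈ tᶜ, (sign i t * x i) • diff x f (insert i t) = ∑ l ∈ tᶜ,
      if l ≠ i then (sign i t * x i * (sign l (insert i t) * x l)) •
        f (insert l (insert i t)) else 0 := by
    intro i _
    rw [diff_apply, smul_sum, compl_insert, ← filter_ne', sum_filter]
    simp only [smul_smul]
  rw [Pi.zero_apply, diff_apply, sum_congr rfl hpair, ← sum_product']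
  refine sum_involution (fun p _ => p.swap) ?_ ?_ (fun p hp => by simpa [and_comm] using hp)
    (by simp)
  · rintro ⟨i, l⟩ hp
    simp only [mem_product, mem_compl] at hp
    by_cases hli : l = i
    · simp [hli]
    · rw [Prod.swap, if_pos hli, if_pos (Ne.symm hli), insert_comm l i t, ← add_smul]
      convert zero_smul R _
      linear_combination (x i * x l) * sign_insert_mul_sign (R := R) (Ne.symm hli) hp.1 hp.2
  · rintro ⟨i, l⟩ _ hne hswap
    exact hne (by simp_all [Prod.swap, Prod.ext_iff])

lemma diff_wedge_add_wedge_diff (x : ι → R) (j : ι) (f : Finset ι → M) :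
    diff x (wedge R j f) + wedge R j (diff x f) = x j • f := by
  ext t
  simp only [Pi.add_apply, Pi.smul_apply]
  by_cases hj : j ∈ t
  · set s := t.erase j
    have hjs : j ∉ s := notMem_erase j t
    have hts : insert j s = t := insert_erase hj
    have hwedge_diff : wedge R j (diff x f) t = x j • f t + ∑ i ∈ tᶜ,
        (sign j s * (sign i s * x i)) • f (insert i s) := by
      rw [wedge, if_pos hj, diff_apply, compl_erase, sum_insert (by simp [hj]), smul_add,
        smul_sum, smul_smul, ← mul_assoc, sign_mul_self, one_mul, hts]
      simp only [smul_smul]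
      rfl
    have hdiff_wedge : diff x (wedge R j f) t = ∑ i ∈ tᶜ,
        (sign i t * x i * sign j (insert i s)) • f (insert i s) := by
      refine sum_congr rfl fun i hi => ?_
      have hij : i ≠ j := fun h => mem_compl.mp hi (h ▸ hj)
      rw [wedge, if_pos (mem_insert_of_mem hj), erase_insert_of_ne hij, smul_smul]
    rw [hwedge_diff, hdiff_wedge, add_left_comm, ← sum_add_distrib, add_eq_left]
    refine sum_eq_zero fun i hi => ?_
    have hit : i ∉ t := mem_compl.mp hi
    have hij : i ≠ j := fun h => hit (h ▸ hj)
    have his : i ∉ s := fun h => hit (mem_of_mem_erase h)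
    rw [← add_smul, ← hts]
    convert zero_smul R _
    linear_combination x i * sign_insert_mul_sign_insert (R := R) hij his hjs
  · rw [wedge, if_neg hj, add_zero, diff_apply, sum_eq_single_of_mem j (mem_compl.mpr hj)]
    · rw [wedge, if_pos (mem_insert_self j t), erase_insert hj, smul_smul, mul_comm,
        ← mul_assoc, sign_mul_self, one_mul]
    · intro i _ hij
      rw [wedge, if_neg (by simp [hj, Ne.symm hij]), smul_zero]

lemma diff_linearMap_comp {M' : Type*} [AddCommGroup M'] [Module R M'] (x : ι → R) (φ : M →ₗ[R] M')
    (f : Finset ι → M) : diff x (φ ∘ f) = φ ∘ diff x f := by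
  ext t
  simp [diff_apply]

lemma exists_eq_diff_add_smul_of_diff_eq_mkQ_comp {x : ι → R} {r : R} {g : Finset ι → M}
    {G' : Finset ι → QuotSMulTop r M} (h : diff x G' = (r • ⊤ : Submodule R M).mkQ ∘ g) :
    ∃ G w, g = diff x G + r • w := by
  obtain ⟨G, rfl⟩ := (Submodule.mkQ_surjective _).comp_left G'
  rw [diff_linearMap_comp] at h
  have hw (t : Finset ι) : ∃ w, r • w = g t - diff x G t := by
    have : g t - diff x G t ∈ r • (⊤ : Submodule R M) := by
      rw [← Submodule.Quotient.mk_eq_zero, ← Submodule.mkQ_apply, map_sub, sub_eq_zero]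
      exact (congrFun h t).symm
    simpa using (Submodule.mem_smul_pointwise_iff_exists _ _ _).mp this
  choose w hw using hw
  exact ⟨G, w, funext fun t => by simp [hw]⟩

theorem exists_diff_eq_of_isWeaklyRegular {x : ι → R} {rs : List R}
    (hrs : IsWeaklyRegular M rs) (hx : ∀ r ∈ rs, r ∈ Ideal.span (Set.range x))
    {f : Finset ι → M} (hf : ∀ t, #t + rs.length ≤ Fintype.card ι → f t = 0)
    (hcyc : diff x f = 0) : ∃ u, diff x u = f := by
  induction hrs with
  | nil M =>
    refine ⟨0, funext fun t => ?_⟩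
    rw [map_zero, Pi.zero_apply, hf t (by simpa using card_le_univ t)]
  | @cons M _ _ r rs hr _ ih =>
    obtain ⟨c, hc⟩ := (Submodule.mem_span_range_iff_exists_fun R).mp (hx r (by simp))
    simp only [smul_eq_mul] at hc
    -- Since `r = ∑ c j * x j`, the Cartan formula makes `r • f` the boundary of `g`.
    set g : Finset ι → M := ∑ j, c j • wedge R j f
    have hdiff_g : diff x g = r • f := by
      have hcartan (j : ι) : diff x (wedge R j f) = x j • f := by
        simpa [hcyc] using diff_wedge_add_wedge_diff x j f
      simp only [g, map_sum, map_smul, hcartan, smul_smul, ← sum_smul, hc]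
    have hg : ∀ t, #t + rs.length ≤ Fintype.card ι → g t = 0 := by
      intro t ht
      simp only [g, Finset.sum_apply]
      refine sum_eq_zero fun j _ => ?_
      rw [Pi.smul_apply, wedge]
      split_ifs with hjt
      · have := card_pos.mpr ⟨j, hjt⟩
        rw [hf _ (by rw [List.length_cons, card_erase_of_mem hjt]; omega), smul_zero, smul_zero]
      · rw [smul_zero]
    have hcyc_mod : diff x ((r • ⊤ : Submodule R M).mkQ ∘ g) = 0 := by
      rw [diff_linearMap_comp, hdiff_g]
      ext t
      rw [Function.comp_apply, Pi.smul_apply, Submodule.mkQ_apply, Pi.zero_apply,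
        Submodule.Quotient.mk_eq_zero]
      exact Submodule.smul_mem_pointwise_smul _ _ _ trivial
    obtain ⟨G', hG'⟩ := ih (fun r' hr' => hx r' (List.mem_cons_of_mem r hr'))
      (fun t ht => by simp [hg t ht]) hcyc_mod
    obtain ⟨G, w, hg_eq⟩ := exists_eq_diff_add_smul_of_diff_eq_mkQ_comp hG'
    -- `r • f = diff x g = r • diff x w`, and `r` is `M`-regular.
    refine ⟨w, funext fun t => hr ?_⟩
    have := congrFun (congrArg (diff x) hg_eq) t
    simp only [hdiff_g, map_add, map_smul, diff_diff] at this
    simpa using this.symm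

theorem mem_span_smul_top_of_sum_smul_eq_zero {x : ι → R} {rs : List R}
    (hrs : IsWeaklyRegular M rs) (hlen : Fintype.card ι ≤ rs.length)
    (hx : ∀ r ∈ rs, r ∈ Ideal.span (Set.range x)) {v : ι → M} (hv : ∑ i, x i • v i = 0)
    (i : ι) : v i ∈ Ideal.span (Set.range x) • (⊤ : Submodule R M) := by
  classical
  set f : Finset ι → M := ∑ j, Pi.single {j} (v j)
  have hf_singleton (j : ι) : f {j} = v j := by
    simp [f, Finset.sum_apply, Pi.single_apply]
  have hf_card {t : Finset ι} (ht : #t ≠ 1) : f t = 0 := by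
    simp only [f, Finset.sum_apply]
    refine sum_eq_zero fun j _ => Pi.single_eq_of_ne ?_ _
    rintro rfl
    exact ht (card_singleton j)
  have hcyc : diff x f = 0 := by
    ext t
    rcases t.eq_empty_or_nonempty with rfl | ht
    · simpa [diff_apply, sign, hf_singleton] using hv
    · refine sum_eq_zero fun j hj => ?_
      rw [hf_card (by rw [card_insert_of_notMem (mem_compl.mp hj)]; have := ht.card_pos; omega),
        smul_zero]
  obtain ⟨u, hu⟩ := exists_diff_eq_of_isWeaklyRegular hrs hx (f := f)
    (fun t ht => hf_card (by omega)) hcyc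
  rw [← hf_singleton, ← hu, diff_apply]
  refine Submodule.sum_mem _ fun l _ => Submodule.smul_mem_smul ?_ trivial
  exact Ideal.mul_mem_left _ _ (Ideal.subset_span ⟨l, rfl⟩)

end KoszulComplex

namespace MvPolynomial

variable {σ R : Type*}

theorem mem_span_X_pow_of_X_pow_mul_mem [CommSemiring R] (D : σ → ℕ) {s : Set σ} {l : σ}
    (hl : l ∉ s) {a : MvPolynomial σ R}
    (ha : X l ^ D l * a ∈ Ideal.span ((fun i => (X i : MvPolynomial σ R) ^ D i) '' s)) :
    a ∈ Ideal.span ((fun i => (X i : MvPolynomial σ R) ^ D i) '' s) := by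
  classical
  have hspan : (fun i => (X i : MvPolynomial σ R) ^ D i) '' s =
      (fun m => monomial m 1) '' ((fun i => Finsupp.single i (D i)) '' s) := by
    rw [Set.image_image]
    simp only [X_pow_eq_monomial]
  rw [hspan, mem_ideal_span_monomial_image] at ha ⊢
  intro m hm
  obtain ⟨_, ⟨i, hi, rfl⟩, hle⟩ := ha (m + Finsupp.single l (D l)) (by
    rwa [mem_support_iff, X_pow_eq_monomial, coeff_monomial_mul', if_pos le_add_self,
      add_tsub_cancel_right, one_mul, ← mem_support_iff])
  have hil : l ≠ i := fun h => hl (h ▸ hi)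
  refine ⟨_, ⟨i, hi, rfl⟩, Finsupp.single_le_iff.mpr ?_⟩
  simpa [Finsupp.single_apply, hil] using Finsupp.single_le_iff.mp hle

theorem isWeaklyRegular_map_X_pow [CommRing R] (D : σ → ℕ) {L : List σ} (hL : L.Nodup) :
    IsWeaklyRegular (MvPolynomial σ R) (L.map fun i => (X i : MvPolynomial σ R) ^ D i) := by
  refine ⟨fun n hn => ?_⟩
  have hn' : n < L.length := by simpa using hn
  have hnot : L[n] ∉ L.take n := fun h => List.disjoint_take_drop hL le_rfl h
    (by rw [List.drop_eq_getElem_cons hn']; exact List.mem_cons_self)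
  have hset : {r | r ∈ (L.map fun i => (X i : MvPolynomial σ R) ^ D i).take n} =
      (fun i => X i ^ D i) '' {i | i ∈ L.take n} := by
    ext
    rw [Set.mem_ofPred, ← List.map_take, List.mem_map]
    rfl
  rw [isSMulRegular_quotient_iff_mem_of_smul_mem, List.getElem_map, Ideal.ofList,
    Ideal.smul_eq_mul, Ideal.mul_top, hset]
  exact fun a => mem_span_X_pow_of_X_pow_mul_mem D hnot

theorem X_mem_radical_span_range {K ι : Type*} [Field K] [IsAlgClosed K] [Finite σ]
    (P : ι → MvPolynomial σ K) (hP : ∀ z : σ → K, (∀ i, eval z (P i) = 0) → z = 0) (j : σ) :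
    X j ∈ (Ideal.span (Set.range P)).radical := by
  have hzero : zeroLocus K (Ideal.span (Set.range P)) ⊆ {0} := fun z hz =>
    hP z (by simpa [zeroLocus_span, coe_aeval_eq_eval] using hz)
  rw [← vanishingIdeal_zeroLocus_eq_radical (K := K)]
  exact vanishingIdeal_anti_mono hzero ((mem_vanishingIdeal_singleton_iff _ _).mpr (by simp))

theorem coeff_eq_zero_of_mem_span_isHomogeneous [CommSemiring R] {ι : Type*}
    {P : ι → MvPolynomial σ R} {k : ℕ} (hP : ∀ i, (P i).IsHomogeneous k) {p : MvPolynomial σ R}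
    (hp : p ∈ Ideal.span (Set.range P)) {m : σ →₀ ℕ} (hm : m.degree < k) : coeff m p = 0 := by
  classical
  induction hp using Submodule.span_induction generalizing m with
  | mem q hq =>
    obtain ⟨i, rfl⟩ := hq
    exact (hP i).coeff_eq_zero hm.ne
  | zero => rw [coeff_zero]
  | add q q' _ _ h h' => rw [coeff_add, h hm, h' hm, add_zero]
  | smul a q _ h =>
    rw [smul_eq_mul, coeff_mul]
    refine Finset.sum_eq_zero fun uv huv => ?_
    have hle : uv.2 ≤ m := (Finset.HasAntidiagonal.mem_antidiagonal.mp huv) ▸ le_add_self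
    rw [h ((Finsupp.degree_mono hle).trans_lt hm), mul_zero]

end MvPolynomial

open MvPolynomial

/-- homogeneous polynomials `P_1,…,P_N` of degree `k ≥ 2` with
`∑ z_i P_i(z) = 0` identically have a nontrivial common root. -/
theorem stmt3 (N k : ℕ) (hN : 1 ≤ N) (hk : 2 ≤ k)
    (P : Fin N → MvPolynomial (Fin N) ℂ)
    (hhom : ∀ i, (P i).IsHomogeneous k)
    (hrel : ∀ z : Fin N → ℂ, ∑ i, z i * MvPolynomial.eval z (P i) = 0) :
    ∃ z : Fin N → ℂ, z ≠ 0 ∧ ∀ i, MvPolynomial.eval z (P i) = 0 := by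
  by_contra! hno
  have hzero (z : Fin N → ℂ) (hz : ∀ i, eval z (P i) = 0) : z = 0 := by
    by_contra h
    obtain ⟨i, hi⟩ := hno z h
    exact hi (hz i)
  have hsyz : ∑ i, P i • (X i : MvPolynomial (Fin N) ℂ) = 0 := MvPolynomial.funext fun z => by
    simp only [map_sum, smul_eq_mul, map_mul, eval_X, map_zero]
    simpa only [mul_comm] using hrel z
  choose D hD using fun j => Ideal.mem_radical_iff.mp (X_mem_radical_span_range P hzero j)
  have hX := KoszulComplex.mem_span_smul_top_of_sum_smul_eq_zero
    (isWeaklyRegular_map_X_pow D (List.nodup_finRange N)) (by simp) (by simpa using hD) hsyz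
    ⟨0, hN⟩
  rw [Ideal.smul_eq_mul, Ideal.mul_top] at hX
  have := coeff_eq_zero_of_mem_span_isHomogeneous hhom hX
    (m := Finsupp.single ⟨0, hN⟩ 1) (by rw [Finsupp.degree_single]; omega)
  simp [coeff_X] at this
end

section
/- Let M_1, M_2 be invertible skew-symmetric 8×8 complex matrices such that M_1^{-1}M_2 has 4 distinct eigenvalues. Then each eigenvalue of M_1^{-1}M_2 has algebraic multiplicity exactly 2, and the set of points z ∈ ℂ^8 \ {0} where the covectors ᵗz M_1 and ᵗz M_2 are linearly dependent is the union of the (nonzero points of the) four corresponding eigenspaces. -/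
/-!
If `M₁⁻¹M₂ z = μ z` then `(μM₁ - M₂) z = 0`, and conversely; so the eigenspace of `M₁⁻¹M₂` for `μ`
is the kernel of the skew-symmetric matrix `μM₁ - M₂`, and the locus where `ᵗz M₁, ᵗz M₂` are
dependent is the union of these kernels. A singular skew-symmetric matrix of even size has a
kernel of dimension at least two, so every eigenvalue has geometric, hence algebraic, multiplicity
at least two. Four distinct eigenvalues then exhaust the degree `8` of the characteristic
polynomial, forcing multiplicity exactly two.
-/

open Matrix Polynomial Module

namespace Matrix

section Skew

variable {ι K : Type*} [Fintype ι] [DecidableEq ι] [Field K]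

theorem det_eq_zero_of_transpose_eq_neg [NeZero (2 : K)] (hodd : Odd (Fintype.card ι))
    {N : Matrix ι ι K} (hN : Nᵀ = -N) : N.det = 0 := by
  have h : N.det = -N.det := by
    conv_lhs => rw [← det_transpose, hN, det_neg, hodd.neg_one_pow, neg_one_mul]
  have h2 : (2 : K) * N.det = 0 := by linear_combination h
  exact (mul_eq_zero.mp h2).resolve_left two_ne_zero

theorem mulVec_extend_subtype_ne_apply (N : Matrix ι ι K) (i₀ : ι) (x : {j // j ≠ i₀} → K)
    (j : ι) : (N *ᵥ Function.extend Subtype.val x 0) j =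
      (fun k : {k // k ≠ i₀} ↦ N j k) ⬝ᵥ x := by
  rw [mulVec, dotProduct, Fintype.sum_eq_add_sum_subtype_ne _ i₀,
    Function.extend_apply' _ _ _ fun ⟨j, hj⟩ ↦ j.2 hj]
  simp only [Pi.zero_apply, mul_zero, zero_add, Subtype.val_injective.extend_apply]
  rfl

/-- The extension by zero of a kernel vector of the principal submatrix deleting `i₀` lies in
`ker N`: its image under `N` is supported at `i₀`, and is orthogonal to `v ∈ ker N = ker Nᵀ`. -/
theorem mulVec_extend_eq_zero_of_transpose_eq_neg {N : Matrix ι ι K} (hN : Nᵀ = -N)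
    {v : ι → K} (hv : N *ᵥ v = 0) {i₀ : ι} (hi₀ : v i₀ ≠ 0) {x : {j // j ≠ i₀} → K}
    (hx : N.submatrix ((↑) : {j // j ≠ i₀} → ι) (↑) *ᵥ x = 0) :
    N *ᵥ Function.extend Subtype.val x 0 = 0 := by
  have hoff : ∀ j ≠ i₀, (N *ᵥ Function.extend Subtype.val x 0) j = 0 := fun j hj ↦ by
    rw [mulVec_extend_subtype_ne_apply]
    exact congrFun hx ⟨j, hj⟩
  have horth : v ⬝ᵥ (N *ᵥ Function.extend Subtype.val x 0) = 0 := by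
    rw [dotProduct_mulVec, ← mulVec_transpose, hN, neg_mulVec, hv, neg_zero, zero_dotProduct]
  rw [dotProduct, Fintype.sum_eq_add_sum_subtype_ne _ i₀] at horth
  simp only [fun j : {j // j ≠ i₀} ↦ hoff j j.2, mul_zero, Finset.sum_const_zero,
    add_zero] at horth
  funext j
  obtain rfl | hj := eq_or_ne j i₀
  · exact (mul_eq_zero.mp horth).resolve_left hi₀
  · exact hoff j hj

theorem two_le_finrank_ker_of_transpose_eq_neg [NeZero (2 : K)]
    (heven : Even (Fintype.card ι)) {N : Matrix ι ι K} (hN : Nᵀ = -N) (hdet : N.det = 0) :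
    2 ≤ finrank K (LinearMap.ker N.toLin') := by
  obtain ⟨v, hv0, hv⟩ := exists_mulVec_eq_zero_iff.mpr hdet
  obtain ⟨i₀, hi₀⟩ := Function.ne_iff.mp hv0
  have hodd : Odd (Fintype.card {j // j ≠ i₀}) := by
    rw [Fintype.card_subtype_compl, Fintype.card_subtype_eq]
    exact Nat.Even.sub_odd (Fintype.card_pos_iff.mpr ⟨i₀⟩) heven odd_one
  obtain ⟨x, hx0, hx⟩ := exists_mulVec_eq_zero_iff.mpr
    (det_eq_zero_of_transpose_eq_neg hodd (N := N.submatrix (↑) (↑))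
      (by rw [transpose_submatrix, hN]; rfl))
  set w := Function.extend Subtype.val x 0
  have hw : N *ᵥ w = 0 := mulVec_extend_eq_zero_of_transpose_eq_neg hN hv hi₀ hx
  have hli : LinearIndependent K ![w, v] := by
    refine linearIndependent_fin2.mpr ⟨hv0, fun a hav ↦ hx0 ?_⟩
    simp only [cons_val_one, cons_val_zero] at hav
    have hwi₀ : w i₀ = 0 := Function.extend_apply' _ _ _ fun ⟨j, hj⟩ ↦ j.2 hj
    have ha : a = 0 := by
      have := congrFun hav i₀
      rw [Pi.smul_apply, smul_eq_mul, hwi₀] at this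
      exact (mul_eq_zero.mp this).resolve_right hi₀
    rw [ha, zero_smul] at hav
    funext k
    exact (Subtype.val_injective.extend_apply x 0 k).symm.trans (congrFun hav k).symm
  calc 2 = finrank K (Submodule.span K (Set.range ![w, v])) := by
        rw [finrank_span_eq_card hli, Fintype.card_fin]
    _ ≤ finrank K (LinearMap.ker N.toLin') := by
        refine Submodule.finrank_mono (Submodule.span_le.mpr ?_)
        rintro _ ⟨i, rfl⟩
        fin_cases i <;> simpa [toLin'_apply]

end Skew

section Pencil

variable {n K : Type*} [Fintype n] [DecidableEq n] [Field K] {M₁ M₂ : Matrix n n K}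

theorem inv_mul_mulVec_eq_smul_iff (h : IsUnit M₁) (z : n → K) (μ : K) :
    (M₁⁻¹ * M₂) *ᵥ z = μ • z ↔ (μ • M₁ - M₂) *ᵥ z = 0 := by
  have hinj : Function.Injective (M₁ *ᵥ ·) := mulVec_injective_iff_isUnit.mpr h
  rw [sub_mulVec, smul_mulVec, sub_eq_zero, ← hinj.eq_iff, mulVec_mulVec, ← mul_assoc,
    mul_nonsing_inv _ ((isUnit_iff_isUnit_det M₁).mp h), one_mul, mulVec_smul, eq_comm]

theorem eigenspace_toLin'_inv_mul (h : IsUnit M₁) (μ : K) :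
    Module.End.eigenspace (M₁⁻¹ * M₂).toLin' μ = LinearMap.ker (μ • M₁ - M₂).toLin' := by
  ext z
  rw [Module.End.mem_eigenspace_iff, LinearMap.mem_ker, toLin'_apply, toLin'_apply,
    inv_mul_mulVec_eq_smul_iff h]

theorem det_smul_sub_eq_zero_iff_mem_spectrum (h : IsUnit M₁) (μ : K) :
    (μ • M₁ - M₂).det = 0 ↔ μ ∈ spectrum K (M₁⁻¹ * M₂) := by
  rw [← spectrum_toLin', ← Module.End.hasEigenvalue_iff_mem_spectrum,
    Module.End.hasEigenvalue_iff, eigenspace_toLin'_inv_mul h, Submodule.ne_bot_iff,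
    ← exists_mulVec_eq_zero_iff]
  simp only [LinearMap.mem_ker, toLin'_apply, and_comm]

theorem exists_smul_vecMul_add_eq_zero_iff (h : IsUnit M₁) {z : n → K} (hz : z ≠ 0) :
    (∃ a b : K, (a, b) ≠ 0 ∧ a • z ᵥ* M₁ + b • z ᵥ* M₂ = 0) ↔
      ∃ μ : K, z ᵥ* (μ • M₁ - M₂) = 0 := by
  constructor
  · rintro ⟨a, b, hab, hcomb⟩
    have hb : b ≠ 0 := by
      rintro rfl
      have ha : a ≠ 0 := fun ha ↦ hab (by rw [ha]; rfl)
      rw [zero_smul, add_zero, smul_eq_zero, or_iff_right ha] at hcomb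
      exact ((isUnit_iff_isUnit_det M₁).mp h).ne_zero (exists_vecMul_eq_zero_iff.mp ⟨z, hz, hcomb⟩)
    refine ⟨-a / b, ?_⟩
    rw [vecMul_sub, vecMul_smul]
    linear_combination (norm := match_scalars <;> field_simp <;> ring) (-b⁻¹) • hcomb
  · rintro ⟨μ, hμ⟩
    refine ⟨μ, -1, by simp, ?_⟩
    rw [← hμ, vecMul_sub, vecMul_smul]
    module

end Pencil

end Matrix

theorem Polynomial.rootMultiplicity_eq_of_le_of_natDegree_le {R : Type*} [CommRing R] [IsDomain R]
    {p : R[X]} {s : Finset R} {k : ℕ} (hk : ∀ x ∈ s, k ≤ p.rootMultiplicity x)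
    (hdeg : p.natDegree ≤ s.card * k) : ∀ x ∈ s, p.rootMultiplicity x = k := by
  classical
  have hsum : ∑ x ∈ s, p.rootMultiplicity x ≤ p.natDegree :=
    calc ∑ x ∈ s, p.rootMultiplicity x = ∑ x ∈ s, p.roots.count x := by simp only [count_roots]
      _ ≤ ∑ x ∈ s ∪ p.roots.toFinset, p.roots.count x :=
          Finset.sum_le_sum_of_subset Finset.subset_union_left
      _ = Multiset.card p.roots := Multiset.sum_count_eq_card fun x hx ↦
          Finset.mem_union_right _ (Multiset.mem_toFinset.mpr hx)
      _ ≤ p.natDegree := card_roots' p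
  have heq : ∑ x ∈ s, k = ∑ x ∈ s, p.rootMultiplicity x := by
    refine le_antisymm (Finset.sum_le_sum hk) ?_
    rw [Finset.sum_const, smul_eq_mul]
    exact hsum.trans hdeg
  exact fun x hx ↦ ((Finset.sum_eq_sum_iff_of_le hk).mp heq x hx).symm

theorem stmt4_general (M₁ M₂ : Matrix (Fin 8) (Fin 8) ℂ)
    (h₁ : M₁ᵀ = -M₁) (h₂ : M₂ᵀ = -M₂) (hu₁ : IsUnit M₁)
    (Λ : Finset ℂ) (hcard : Λ.card = 4)
    (hspec : spectrum ℂ (M₁⁻¹ * M₂) = ↑Λ) :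
    (∀ lam ∈ Λ, (M₁⁻¹ * M₂).charpoly.rootMultiplicity lam = 2) ∧
    {z : Fin 8 → ℂ | z ≠ 0 ∧ ∃ a b : ℂ, (a, b) ≠ 0 ∧
        a • Matrix.vecMul z M₁ + b • Matrix.vecMul z M₂ = 0} =
      ⋃ lam ∈ Λ, {z : Fin 8 → ℂ | z ≠ 0 ∧ (M₁⁻¹ * M₂).mulVec z = lam • z} := by
  have hskew : ∀ μ : ℂ, (μ • M₁ - M₂)ᵀ = -(μ • M₁ - M₂) := fun μ ↦ by
    rw [transpose_sub, transpose_smul, h₁, h₂]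
    module
  have hdet : ∀ μ, (μ • M₁ - M₂).det = 0 ↔ μ ∈ Λ := fun μ ↦ by
    rw [det_smul_sub_eq_zero_iff_mem_spectrum hu₁, hspec, Finset.mem_coe]
  have htwo : ∀ μ ∈ Λ, 2 ≤ (M₁⁻¹ * M₂).charpoly.rootMultiplicity μ := fun μ hμ ↦
    calc 2 ≤ finrank ℂ (LinearMap.ker (μ • M₁ - M₂).toLin') :=
          two_le_finrank_ker_of_transpose_eq_neg (by decide) (hskew μ) ((hdet μ).mpr hμ)
      _ = finrank ℂ (Module.End.eigenspace (M₁⁻¹ * M₂).toLin' μ) := by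
          rw [eigenspace_toLin'_inv_mul hu₁]
      _ ≤ _ := charpoly_toLin' (M₁⁻¹ * M₂) ▸ LinearMap.finrank_eigenspace_le _ μ
  refine ⟨rootMultiplicity_eq_of_le_of_natDegree_le htwo
    (by rw [charpoly_natDegree_eq_dim, hcard, Fintype.card_fin]), ?_⟩
  ext z
  simp only [Set.mem_ofPred_eq, Set.mem_iUnion, exists_prop]
  constructor
  · rintro ⟨hz, hpencil⟩
    obtain ⟨μ, hμ⟩ := (exists_smul_vecMul_add_eq_zero_iff hu₁ hz).mp hpencil
    rw [← mulVec_transpose, hskew, neg_mulVec, neg_eq_zero] at hμ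
    exact ⟨μ, (hdet μ).mp (exists_mulVec_eq_zero_iff.mp ⟨z, hz, hμ⟩), hz,
      (inv_mul_mulVec_eq_smul_iff hu₁ z μ).mpr hμ⟩
  · rintro ⟨μ, -, hz, heig⟩
    refine ⟨hz, (exists_smul_vecMul_add_eq_zero_iff hu₁ hz).mpr ⟨μ, ?_⟩⟩
    rw [← mulVec_transpose, hskew, neg_mulVec, neg_eq_zero, ← inv_mul_mulVec_eq_smul_iff hu₁]
    exact heig

/-- for invertible skew-symmetric `8×8` matrices `M₁, M₂` such that
`M₁⁻¹M₂` has 4 distinct eigenvalues, each eigenvalue has algebraic multiplicity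
exactly 2, and the locus where `ᵗz M₁` and `ᵗz M₂` are linearly dependent is the
union of the (nonzero points of the) four eigenspaces. -/
theorem stmt4 (M₁ M₂ : Matrix (Fin 8) (Fin 8) ℂ)
    (h₁ : M₁ᵀ = -M₁) (h₂ : M₂ᵀ = -M₂) (hu₁ : IsUnit M₁) (hu₂ : IsUnit M₂)
    (Λ : Finset ℂ) (hcard : Λ.card = 4)
    (hspec : spectrum ℂ (M₁⁻¹ * M₂) = ↑Λ) :
    (∀ lam ∈ Λ, (M₁⁻¹ * M₂).charpoly.rootMultiplicity lam = 2) ∧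
    {z : Fin 8 → ℂ | z ≠ 0 ∧ ∃ a b : ℂ, (a, b) ≠ 0 ∧
        a • Matrix.vecMul z M₁ + b • Matrix.vecMul z M₂ = 0} =
      ⋃ lam ∈ Λ, {z : Fin 8 → ℂ | z ≠ 0 ∧ (M₁⁻¹ * M₂).mulVec z = lam • z} :=
  stmt4_general M₁ M₂ h₁ h₂ hu₁ Λ hcard hspec
end

section
/- Let Ω be an (n,0)-covector and ω a (1,1)-covector on an (n+s)-dimensional complex vector space (so that Ω has degree n < n+s) satisfying Ω ∧ ω = 0. Suppose additionally α is a (1,0)-covector with Ω ∧ α = 0 and ᾱ·ω = (i/2)ᾱ, where ᾱ·Ω denotes contraction of Ω with the metric-dual vector of ᾱ. Then the forms Ω̂ = ᾱ·Ω and ω̂ = ω - (i/(2‖α‖²)) α ∧ ᾱ satisfy Ω̂ ∧ ω̂ = 0. -/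
open CliffordAlgebra

lemma contract_deriv {V : Type*} [AddCommGroup V] [Module ℂ V]
    (d : Module.Dual ℂ V) (n : ℕ)
    {Ω : CliffordAlgebra (0 : QuadraticForm ℂ V)}
    (hdeg : Ω ∈ (LinearMap.range (CliffordAlgebra.ι (0 : QuadraticForm ℂ V)) ^ n :
      Submodule ℂ (CliffordAlgebra (0 : QuadraticForm ℂ V))))
    (y : CliffordAlgebra (0 : QuadraticForm ℂ V)) :
    contractLeft d (Ω * y) =
      contractLeft d Ω * y + ((-1 : ℂ)) ^ n • (Ω * contractLeft d y) := by
  induction hdeg using Submodule.pow_induction_on_left' generalizing y with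
  | algebraMap r =>
      simp [Algebra.smul_def, contractLeft_algebraMap_mul, contractLeft_algebraMap, mul_assoc]
  | add x z i hx hz ihx ihz =>
      simp only [add_mul, map_add, ihx, ihz, smul_add]
      abel
  | mem_mul m hm i x hx ih =>
      obtain ⟨v, rfl⟩ := hm
      rw [mul_assoc, contractLeft_ι_mul, ih, contractLeft_ι_mul]
      simp only [smul_sub, sub_mul, smul_mul_assoc, mul_add, smul_add, smul_smul, mul_smul_comm,
        pow_succ, mul_neg_one, neg_smul, mul_assoc]
      abel

/-- pointwise exterior algebra at a point of a Kähler manifold of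
complex dimension `n + s`; forms are elements of the exterior algebra of the
space `V` of complex covectors, realized as
`CliffordAlgebra (0 : QuadraticForm ℂ V)`.  The contraction `ᾱ·` by the
metric-dual vector of `ᾱ` is contraction `⌋` by a dual element `d` with
`d α = ‖α‖²`.  If `Ω` is an `(n,0)`-covector (degree `n` element) with
`Ω ∧ ω = 0`, `Ω ∧ α = 0` and `ᾱ·ω = (i/2)ᾱ`, then
`Ω̂ = ᾱ·Ω` and `ω̂ = ω - (i/(2‖α‖²)) α ∧ ᾱ` satisfy `Ω̂ ∧ ω̂ = 0`. -/
theorem stmt16 {V : Type*} [AddCommGroup V] [Module ℂ V] (n : ℕ)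
    (Ω ω : CliffordAlgebra (0 : QuadraticForm ℂ V))
    (α abar : V) (d : Module.Dual ℂ V) (s : ℝ) (hs : 0 < s)
    (hd : d α = (s : ℂ))
    (hdeg : Ω ∈ (LinearMap.range (CliffordAlgebra.ι (0 : QuadraticForm ℂ V)) ^ n :
      Submodule ℂ (CliffordAlgebra (0 : QuadraticForm ℂ V))))
    (hΩω : Ω * ω = 0)
    (hΩα : Ω * CliffordAlgebra.ι (0 : QuadraticForm ℂ V) α = 0)
    (hαω : contractLeft d ω =
      (Complex.I / 2) • CliffordAlgebra.ι (0 : QuadraticForm ℂ V) abar) :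
    contractLeft d Ω *
      (ω - (Complex.I / (2 * (s : ℂ))) •
        (CliffordAlgebra.ι (0 : QuadraticForm ℂ V) α *
          CliffordAlgebra.ι (0 : QuadraticForm ℂ V) abar)) = 0 := by
  have h1 := contract_deriv d n hdeg ω
  have h2 := contract_deriv d n hdeg (CliffordAlgebra.ι (0 : QuadraticForm ℂ V) α)
  rw [hΩω, map_zero, hαω] at h1
  rw [hΩα, map_zero, contractLeft_ι, hd] at h2
  have hA := eq_neg_of_add_eq_zero_left h1.symm
  have hB := eq_neg_of_add_eq_zero_left h2.symm
  have hs' : (s:ℂ) ≠ 0 := by exact_mod_cast hs.ne'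
  rw [mul_sub, hA, mul_smul_comm, mul_smul_comm, ← mul_assoc, hB]
  simp only [Algebra.algebraMap_eq_smul_one, mul_smul_comm, mul_one, smul_mul_assoc,
    neg_mul, smul_neg, smul_smul, neg_neg]
  match_scalars
  field_simp
  ring
end

section
/- Let z ∈ ℂ^8 be of the form z = (Z_1, εw, 0, 0) with Z_1 ∈ ℂ² of norm 1, w ∈ ℂ² of norm 1, ε > 0, and let λ_1,…,λ_4 ∈ ℂ be distinct. Define ρ_i(z) = λ_i - r_λ(z)/r(z), where r(z) = |z|² and r_λ(z) = λ_1(|z_1|²+|z_2|²) + λ_2(|z_3|²+|z_4|²) + λ_3(|z_5|²+|z_6|²) + λ_4(|z_7|²+|z_8|²). Then as ε → 0: ρ_1(z) = O(ε²) while ρ_2(z) → λ_2 - λ_1 ≠ 0, and consequently the limit of ρ_1(z)/|ρ_1(z)| along the sequence z_ε = (Z_1, (ε,0), 0, 0) versus z'_ε = (Z_1, (0,ε), 0, 0) leads to the 2-form (β∧β̄)/‖β‖² having distinct limits dz_4∧dz̄_4 and dz_3∧dz̄_3 respectively; hence (β∧β̄)/‖β‖² does not extend continuously to the locus {ρ_1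 = 0, z_3 = z_4 = ⋯ = 0}. -/
/-! On the curve `z(ε) = (Z, ε(u, v), 0, 0)` with `|Z| = |(u, v)| = 1` one has `r = 1 + ε²` and
`r_λ = λ₁ + λ₂ε²`, so `ρ₁ = -(λ₂ - λ₁)ε²/(1 + ε²)` and `ρ₂ = (λ₂ - λ₁)/(1 + ε²)`. Hence
`β = (λ₂ - λ₁)ε/(1 + ε²) · (εZ₂, -εZ₁, -v, u, 0, 0, 0, 0)`, and since `(β∧β̄)/‖β‖²` only sees
the complex line spanned by `β`, it tends to the projection onto the line of
`(0, 0, -v, u, 0, 0, 0, 0)`: the limit depends on the direction `(u, v)` of approach. -/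

open Complex ComplexConjugate Filter Topology Asymptotics

noncomputable section

section ProjLine

variable {n : Type*} [Fintype n]

/-- The coefficient matrix of `(β∧β̄)/‖β‖²` for `β = ∑ vⱼ dzⱼ`, i.e. the orthogonal projection
onto `ℂ v` (`0` at `v = 0`). -/
def projLine (v : n → ℂ) : Matrix n n ℂ :=
  fun j k => v j * conj (v k) / ((∑ l, normSq (v l) : ℝ) : ℂ)

theorem projLine_smul {c : ℂ} (hc : c ≠ 0) (v : n → ℂ) : projLine (c • v) = projLine v := by
  ext j k
  have hc' : (normSq c : ℂ) ≠ 0 := by exact_mod_cast (normSq_pos.2 hc).ne'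
  simp only [projLine, Pi.smul_apply, smul_eq_mul, map_mul, ← Finset.mul_sum, ofReal_mul]
  rw [mul_mul_mul_comm, mul_conj]
  exact mul_div_mul_left _ _ hc'

theorem sum_normSq_ne_zero {v : n → ℂ} (hv : v ≠ 0) : ∑ l, normSq (v l) ≠ 0 := by
  obtain ⟨i, hi⟩ := Function.ne_iff.1 hv
  exact (Finset.sum_pos' (fun l _ => normSq_nonneg _) ⟨i, Finset.mem_univ _, normSq_pos.2 hi⟩).ne'

theorem continuousAt_projLine {v : n → ℂ} (hv : v ≠ 0) : ContinuousAt projLine v := by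
  have hS : ((∑ l, normSq (v l) : ℝ) : ℂ) ≠ 0 := ofReal_ne_zero.2 (sum_normSq_ne_zero hv)
  have hnormSq : Continuous fun w : n → ℂ => ((∑ l, normSq (w l) : ℝ) : ℂ) :=
    continuous_ofReal.comp <| continuous_finsetSum _ fun l _ =>
      continuous_normSq.comp (continuous_apply l)
  refine continuousAt_pi.2 fun j => continuousAt_pi.2 fun k => ?_
  exact ContinuousAt.div (by fun_prop) hnormSq.continuousAt hS

theorem projLine_single [DecidableEq n] (i : n) {a : ℂ} (ha : a ≠ 0) :
    projLine (Pi.single i a) = Matrix.single i i 1 := by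
  ext j k
  have : (normSq a : ℂ) ≠ 0 := by exact_mod_cast (normSq_pos.2 ha).ne'
  simp only [projLine, Pi.single_apply, Matrix.single_apply, apply_ite normSq, normSq_zero,
    Finset.sum_ite_eq', Finset.mem_univ, if_true]
  by_cases hj : j = i <;> by_cases hk : k = i <;> simp [hj, hk, mul_conj, div_self this] <;> grind

end ProjLine

section Twist

variable (lam : Fin 4 → ℂ)

def sqNorm (z : Fin 8 → ℂ) : ℝ := ∑ j, normSq (z j)

def lamSqNorm (z : Fin 8 → ℂ) : ℂ :=
  lam 0 * ((normSq (z 0) + normSq (z 1) : ℝ) : ℂ) +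
  lam 1 * ((normSq (z 2) + normSq (z 3) : ℝ) : ℂ) +
  lam 2 * ((normSq (z 4) + normSq (z 5) : ℝ) : ℂ) +
  lam 3 * ((normSq (z 6) + normSq (z 7) : ℝ) : ℂ)

def rho (i : Fin 4) (z : Fin 8 → ℂ) : ℂ := lam i - lamSqNorm lam z / (sqNorm z : ℂ)

/-- The coefficients of `β = ᵗZ diag(ρ₁J, ρ₂J, ρ₃J, ρ₄J) dZ` in the basis `dz₁, …, dz₈`. -/
def betaCoeff (z : Fin 8 → ℂ) : Fin 8 → ℂ :=
  ![-(rho lam 0 z) * z 1, rho lam 0 z * z 0, -(rho lam 1 z) * z 3, rho lam 1 z * z 2,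
    -(rho lam 2 z) * z 5, rho lam 2 z * z 4, -(rho lam 3 z) * z 7, rho lam 3 z * z 6]

def approachCurve (Z : Fin 2 → ℂ) (u v : ℂ) (ε : ℝ) : Fin 8 → ℂ :=
  ![Z 0, Z 1, ε * u, ε * v, 0, 0, 0, 0]

variable {Z : Fin 2 → ℂ} {u v : ℂ}

theorem sqNorm_curve (hZ : normSq (Z 0) + normSq (Z 1) = 1) (huv : normSq u + normSq v = 1)
    (ε : ℝ) : sqNorm (approachCurve Z u v ε) = 1 + ε ^ 2 := by
  simp only [sqNorm, approachCurve, Fin.sum_univ_eight]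
  simp [normSq_ofReal]
  linear_combination hZ + ε ^ 2 * huv

theorem lamSqNorm_curve (hZ : normSq (Z 0) + normSq (Z 1) = 1)
    (huv : normSq u + normSq v = 1) (ε : ℝ) :
    lamSqNorm lam (approachCurve Z u v ε) = lam 0 + lam 1 * ε ^ 2 := by
  have huv' : (normSq u : ℂ) + normSq v = 1 := by exact_mod_cast huv
  simp only [lamSqNorm, approachCurve, Matrix.cons_val, map_mul, normSq_ofReal, normSq_zero, hZ]
  push_cast
  linear_combination lam 1 * ε ^ 2 * huv'

theorem rho_curve (hZ : normSq (Z 0) + normSq (Z 1) = 1) (huv : normSq u + normSq v = 1)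
    (i : Fin 4) (ε : ℝ) :
    rho lam i (approachCurve Z u v ε) = lam i - (lam 0 + lam 1 * ε ^ 2) / (1 + ε ^ 2) := by
  rw [rho, lamSqNorm_curve lam hZ huv, sqNorm_curve hZ huv]
  push_cast
  rfl

theorem rho_zero_curve (hZ : normSq (Z 0) + normSq (Z 1) = 1) (huv : normSq u + normSq v = 1)
    (ε : ℝ) : rho lam 0 (approachCurve Z u v ε) = -(lam 1 - lam 0) * ε ^ 2 / (1 + ε ^ 2) := by
  have : (1 + (ε : ℂ) ^ 2) ≠ 0 := by exact_mod_cast (by positivity : (1 + ε ^ 2) ≠ 0)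
  rw [rho_curve lam hZ huv]
  field_simp
  ring

theorem rho_one_curve (hZ : normSq (Z 0) + normSq (Z 1) = 1) (huv : normSq u + normSq v = 1)
    (ε : ℝ) : rho lam 1 (approachCurve Z u v ε) = (lam 1 - lam 0) / (1 + ε ^ 2) := by
  have : (1 + (ε : ℂ) ^ 2) ≠ 0 := by exact_mod_cast (by positivity : (1 + ε ^ 2) ≠ 0)
  rw [rho_curve lam hZ huv]
  field_simp
  ring

theorem betaCoeff_curve (hZ : normSq (Z 0) + normSq (Z 1) = 1) (huv : normSq u + normSq v = 1)
    (ε : ℝ) : betaCoeff lam (approachCurve Z u v ε) =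
      ((lam 1 - lam 0) * ε / (1 + ε ^ 2)) • ![ε * Z 1, -(ε * Z 0), -v, u, 0, 0, 0, 0] := by
  rw [betaCoeff, rho_zero_curve lam hZ huv, rho_one_curve lam hZ huv]
  ext j
  fin_cases j <;> simp [approachCurve] <;> ring

theorem isBigO_rho_zero_curve (hZ : normSq (Z 0) + normSq (Z 1) = 1)
    (huv : normSq u + normSq v = 1) (l : Filter ℝ) :
    (fun ε : ℝ => rho lam 0 (approachCurve Z u v ε)) =O[l] fun ε => ε ^ 2 := by
  refine IsBigO.of_bound ‖lam 1 - lam 0‖ (Eventually.of_forall fun ε => ?_)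
  have hden : (1 + (ε : ℂ) ^ 2) = ((1 + ε ^ 2 : ℝ) : ℂ) := by push_cast; ring
  rw [rho_zero_curve lam hZ huv, hden, norm_div, norm_mul, norm_neg, norm_pow, norm_real,
    norm_real, Real.norm_of_nonneg (by positivity : 0 ≤ 1 + ε ^ 2), norm_pow, Real.norm_eq_abs,
    sq_abs, mul_div_assoc]
  gcongr
  exact div_le_self (sq_nonneg ε) (le_add_of_nonneg_right (sq_nonneg ε))

theorem tendsto_rho_one_curve (hZ : normSq (Z 0) + normSq (Z 1) = 1)
    (huv : normSq u + normSq v = 1) :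
    Tendsto (fun ε : ℝ => rho lam 1 (approachCurve Z u v ε)) (𝓝 0) (𝓝 (lam 1 - lam 0)) := by
  simp_rw [rho_one_curve lam hZ huv]
  have hcont : Continuous fun ε : ℝ => (lam 1 - lam 0) / (1 + (ε : ℂ) ^ 2) :=
    continuous_const.div (by fun_prop) fun ε => by
      exact_mod_cast (by positivity : (1 + ε ^ 2) ≠ 0)
  simpa using hcont.tendsto 0

theorem projLine_betaCoeff_curve (hZ : normSq (Z 0) + normSq (Z 1) = 1)
    (huv : normSq u + normSq v = 1) (hlam : lam 1 ≠ lam 0) {ε : ℝ} (hε : ε ≠ 0) :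
    projLine (betaCoeff lam (approachCurve Z u v ε)) =
      projLine ![ε * Z 1, -(ε * Z 0), -v, u, 0, 0, 0, 0] := by
  have hden : (1 + (ε : ℂ) ^ 2) ≠ 0 := by exact_mod_cast (by positivity : (1 + ε ^ 2) ≠ 0)
  rw [betaCoeff_curve lam hZ huv, projLine_smul]
  exact div_ne_zero (mul_ne_zero (sub_ne_zero.2 hlam) (ofReal_ne_zero.2 hε)) hden

theorem tendsto_projLine_betaCoeff_curve (hZ : normSq (Z 0) + normSq (Z 1) = 1)
    (huv : normSq u + normSq v = 1) (hlam : lam 1 ≠ lam 0) :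
    Tendsto (fun ε : ℝ => projLine (betaCoeff lam (approachCurve Z u v ε))) (𝓝[≠] 0)
      (𝓝 (projLine ![0, 0, -v, u, 0, 0, 0, 0])) := by
  have hlim : Tendsto (fun ε : ℝ => ![ε * Z 1, -(ε * Z 0), -v, u, 0, 0, 0, 0]) (𝓝 0)
      (𝓝 ![0, 0, -v, u, 0, 0, 0, 0]) := by
    have hcont : Continuous fun ε : ℝ => ![ε * Z 1, -(ε * Z 0), -v, u, 0, 0, 0, 0] := by
      fun_prop
    simpa using hcont.tendsto 0
  have hne : ![0, 0, -v, u, 0, 0, 0, 0] ≠ 0 := by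
    intro h
    have hu : u = 0 := by simpa using congrFun h 3
    have hv : v = 0 := by simpa using congrFun h 2
    simp [hu, hv] at huv
  refine ((continuousAt_projLine hne).tendsto.comp (hlim.mono_left nhdsWithin_le_nhds)).congr' ?_
  filter_upwards [self_mem_nhdsWithin] with ε hε
  exact (projLine_betaCoeff_curve lam hZ huv hlam hε).symm

end Twist

end

/-- non-removable singularity of the SU(7)-structure on `ℂP⁷`.
With `β = ᵗZ diag(ρ₁J, ρ₂J, ρ₃J, ρ₄J) dZ` (components `b`),
`ρ_i(z) = λ_i - r_λ(z)/r(z)`, and the coefficient matrix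
`T(z)_{jk} = b_j b̄_k / ‖β‖²` of `(β∧β̄)/‖β‖²`: along `z_ε = (Z₁, (ε,0), 0, 0)`
one has `ρ₁ = O(ε²)`, `ρ₂ → λ₂ - λ₁ ≠ 0`, and `T` tends to the coefficient
matrix of `dz₄∧dz̄₄`, while along `z'_ε = (Z₁, (0,ε), 0, 0)` it tends to that of
`dz₃∧dz̄₃`; hence `(β∧β̄)/‖β‖²` admits no common limit, i.e. does not extend
continuously to the locus `{ρ₁ = 0, z₃ = ⋯ = z₈ = 0}`. -/
theorem stmt19 (Z : Fin 2 → ℂ) (hZ : Complex.normSq (Z 0) + Complex.normSq (Z 1) = 1)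
    (lam : Fin 4 → ℂ) (hlam : Function.Injective lam) :
    let r : (Fin 8 → ℂ) → ℝ := fun z => ∑ j, Complex.normSq (z j)
    let rl : (Fin 8 → ℂ) → ℂ := fun z =>
      lam 0 * ((Complex.normSq (z 0) + Complex.normSq (z 1) : ℝ) : ℂ) +
      lam 1 * ((Complex.normSq (z 2) + Complex.normSq (z 3) : ℝ) : ℂ) +
      lam 2 * ((Complex.normSq (z 4) + Complex.normSq (z 5) : ℝ) : ℂ) +
      lam 3 * ((Complex.normSq (z 6) + Complex.normSq (z 7) : ℝ) : ℂ)
    let ρ : Fin 4 → (Fin 8 → ℂ) → ℂ := fun i z => lam i - rl z / ((r z : ℝ) : ℂ)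
    let b : (Fin 8 → ℂ) → (Fin 8 → ℂ) := fun z =>
      ![-(ρ 0 z) * z 1, ρ 0 z * z 0, -(ρ 1 z) * z 3, ρ 1 z * z 2,
        -(ρ 2 z) * z 5, ρ 2 z * z 4, -(ρ 3 z) * z 7, ρ 3 z * z 6]
    let T : (Fin 8 → ℂ) → Matrix (Fin 8) (Fin 8) ℂ := fun z j k =>
      b z j * (starRingEnd ℂ) (b z k) /
        (((∑ l, Complex.normSq (b z l) : ℝ)) : ℂ)
    let zseq : ℝ → (Fin 8 → ℂ) := fun ε =>
      ![Z 0, Z 1, (ε : ℂ), 0, 0, 0, 0, 0]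
    let zseq' : ℝ → (Fin 8 → ℂ) := fun ε =>
      ![Z 0, Z 1, 0, (ε : ℂ), 0, 0, 0, 0]
    ((fun ε : ℝ => ρ 0 (zseq ε)) =O[𝓝[>] (0 : ℝ)] fun ε => ε ^ 2) ∧
    Tendsto (fun ε : ℝ => ρ 1 (zseq ε)) (𝓝[>] (0 : ℝ))
      (𝓝 (lam 1 - lam 0)) ∧
    lam 1 - lam 0 ≠ 0 ∧
    Tendsto (fun ε : ℝ => T (zseq ε)) (𝓝[>] (0 : ℝ))
      (𝓝 (Matrix.single 3 3 (1 : ℂ))) ∧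
    Tendsto (fun ε : ℝ => T (zseq' ε)) (𝓝[>] (0 : ℝ))
      (𝓝 (Matrix.single 2 2 (1 : ℂ))) ∧
    ¬ ∃ L : Matrix (Fin 8) (Fin 8) ℂ,
        Tendsto (fun ε : ℝ => T (zseq ε)) (𝓝[>] (0 : ℝ)) (𝓝 L) ∧
        Tendsto (fun ε : ℝ => T (zseq' ε)) (𝓝[>] (0 : ℝ)) (𝓝 L) := by
  intro r rl ρ b T zseq zseq'
  have hzseq : zseq = approachCurve Z 1 0 := by funext ε; simp [zseq, approachCurve]
  have hzseq' : zseq' = approachCurve Z 0 1 := by funext ε; simp [zseq', approachCurve]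
  have h10 : normSq (1 : ℂ) + normSq 0 = 1 := by simp
  have h01 : normSq (0 : ℂ) + normSq 1 = 1 := by simp
  have hne : lam 1 ≠ lam 0 := hlam.ne (by decide)
  have hT : Tendsto (fun ε : ℝ => T (zseq ε)) (𝓝[>] 0) (𝓝 (Matrix.single 3 3 1)) := by
    have hsingle : ![(0 : ℂ), 0, -0, 1, 0, 0, 0, 0] = Pi.single 3 1 := by
      ext j; fin_cases j <;> simp
    rw [hzseq, ← projLine_single 3 one_ne_zero, ← hsingle]
    exact (tendsto_projLine_betaCoeff_curve lam hZ h10 hne).mono_left (nhdsGT_le_nhdsNE 0)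
  have hT' : Tendsto (fun ε : ℝ => T (zseq' ε)) (𝓝[>] 0) (𝓝 (Matrix.single 2 2 1)) := by
    have hsingle : ![(0 : ℂ), 0, -1, 0, 0, 0, 0, 0] = Pi.single 2 (-1) := by
      ext j; fin_cases j <;> simp
    rw [hzseq', ← projLine_single 2 (neg_ne_zero.2 one_ne_zero), ← hsingle]
    exact (tendsto_projLine_betaCoeff_curve lam hZ h01 hne).mono_left (nhdsGT_le_nhdsNE 0)
  refine ⟨hzseq ▸ isBigO_rho_zero_curve lam hZ h10 _,
    hzseq ▸ (tendsto_rho_one_curve lam hZ h10).mono_left nhdsWithin_le_nhds,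
    sub_ne_zero.2 hne, hT, hT', ?_⟩
  rintro ⟨L, hL, hL'⟩
  have hsame := (tendsto_nhds_unique hL hT).symm.trans (tendsto_nhds_unique hL' hT')
  simpa using congrFun (congrFun hsame 3) 3
end
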